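/- Let G be a finite perfect multiplicative Lie algebra with trivial Schur multiplier M̃(G) = 1, and let 1 → 1 → H →^φ G → 1 be a universal central extension of G. Then the identity extension 1 → 1 → G →^{id} G → 1 is also universal; consequently every central extension 1 → N → K →^ψ G → 1 of G splits. -/

import Mathlib

/-- A multiplicative Lie algebra (Ellis): a group `G` with a second binary
operation `⋆` satisfying the five identities. `ˣy` denotes `x*y*x⁻¹`. -/
class MulLie (G : Type*) [Group G] where
  star : G → G → G
  star_self : ∀ x : G, star x x = 1
  star_mul_right : ∀ x y z : G, star x (y * z) = star x y * (y * star x z * y⁻¹)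
  star_mul_left : ∀ x y z : G, star (x * y) z = (x * star y z * x⁻¹) * star x z
  jacobi : ∀ x y z : G,
    star (star x y) (y * z * y⁻¹) * star (star y z) (z * x * z⁻¹) *
      star (star z x) (x * y * x⁻¹) = 1
  conj_star : ∀ x y z : G, z * star x y * z⁻¹ = star (z * x * z⁻¹) (z * y * z⁻¹)

open MulLie
open scoped commutatorElement

/-- `𝒵(G) = LZ(G) ∩ Z(G)`. -/
def zSet (G : Type u) [Group G] [MulLie G] : Set G :=
  {x : G | (∀ y : G, star x y = 1) ∧ ∀ y : G, x * y = y * x}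

/-- A central extension `1 → ker f → E → G → 1` of the multiplicative Lie
algebra `G`. -/
structure CentralExtOf (G : Type u) [Group G] [MulLie G] : Type (u + 1) where
  E : Type u
  [grp : Group E]
  [lie : MulLie E]
  f : E →* G
  surj : Function.Surjective f
  map_star : ∀ x y : E, f (MulLie.star x y) = star (f x) (f y)
  central : ∀ x : E, f x = 1 → x ∈ zSet E

attribute [instance] CentralExtOf.grp CentralExtOf.lie

/-- A central extension is universal if every central extension of `G` receives
a unique multiplicative Lie algebra homomorphism from it commuting with the
projections to `G`. -/
def IsUniversal {G : Type u} [Group G] [MulLie G] (C : CentralExtOf G) : Prop :=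
  ∀ D : CentralExtOf G, ∃! θ : C.E →* D.E,
    (∀ x y : C.E, θ (star x y) = star (θ x) (θ y)) ∧ ∀ x : C.E, D.f (θ x) = C.f x


lemma one_star {G : Type u} [Group G] [MulLie G] (y : G) : star (1 : G) y = 1 := by
  have h := star_mul_left (1 : G) 1 y
  simp only [one_mul, mul_one, inv_one] at h
  exact mul_left_cancel (a := star (1 : G) y) (by rw [mul_one]; exact h.symm)

/-- The identity extension `1 → 1 → G → G → 1`. -/
def idExt (G : Type u) [Group G] [MulLie G] : CentralExtOf G where
  E := G
  f := MonoidHom.id G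
  surj := Function.surjective_id
  map_star _ _ := rfl
  central x hx := by
    subst hx
    exact ⟨fun y => one_star y, fun y => by simp⟩

/-! Since `M̃(G) = 1`, the projection of the universal central extension `H → G` is an
isomorphism of multiplicative Lie algebras, and universality is invariant under isomorphism
of central extensions. So `id : G → G` is universal, and applying its universal property to
any central extension `K → G` yields a multiplicative Lie section. -/

section

variable {G : Type u} [Group G] [MulLie G]

theorem IsUniversal.of_mulEquiv {C C' : CentralExtOf G} (e : C'.E ≃* C.E)
    (he_star : ∀ x y : C'.E, e (star x y) = star (e x) (e y))
    (he_f : ∀ x : C'.E, C.f (e x) = C'.f x) (h : IsUniversal C) : IsUniversal C' := by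
  intro D
  obtain ⟨θ, ⟨hθ_star, hθ_f⟩, hθ_unique⟩ := h D
  refine ⟨θ.comp e.toMonoidHom, ⟨fun x y => ?_, fun x => ?_⟩, ?_⟩
  · simp only [MonoidHom.comp_apply, MulEquiv.coe_toMonoidHom, he_star, hθ_star]
  · simp only [MonoidHom.comp_apply, MulEquiv.coe_toMonoidHom, hθ_f, he_f]
  · rintro ψ ⟨hψ_star, hψ_f⟩
    have he_symm_star (x y : C.E) : e.symm (star x y) = star (e.symm x) (e.symm y) :=
      e.injective (by simp only [he_star, MulEquiv.apply_symm_apply])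
    have he_symm_f (x : C.E) : C'.f (e.symm x) = C.f x := by
      rw [← he_f, MulEquiv.apply_symm_apply]
    have hψ : ψ.comp e.symm.toMonoidHom = θ := by
      refine hθ_unique _ ⟨fun x y => ?_, fun x => ?_⟩
      · simp only [MonoidHom.comp_apply, MulEquiv.coe_toMonoidHom, he_symm_star, hψ_star]
      · simp only [MonoidHom.comp_apply, MulEquiv.coe_toMonoidHom, hψ_f, he_symm_f]
    ext x
    simp [← hψ]

theorem idExt_isUniversal_of_injective {C : CentralExtOf G} (hinj : Function.Injective C.f)
    (h : IsUniversal C) : IsUniversal (idExt G) := by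
  let e := MulEquiv.ofBijective C.f ⟨hinj, C.surj⟩
  have he_f (g : G) : C.f (e.symm g) = g := e.apply_symm_apply g
  have he_star (x y : G) : e.symm (star x y) = star (e.symm x) (e.symm y) :=
    hinj (by rw [he_f, C.map_star, he_f, he_f])
  exact h.of_mulEquiv (C' := idExt G) e.symm he_star he_f

theorem IsUniversal.exists_section_of_idExt (h : IsUniversal (idExt G)) (D : CentralExtOf G) :
    ∃ s : G →* D.E, (∀ x y : G, s (star x y) = star (s x) (s y)) ∧ ∀ g : G, D.f (s g) = g :=
  (h D).exists

end

theorem idExt_universal_and_splits_general {G : Type u} [Group G] [MulLie G]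
    (C : CentralExtOf G) (hinj : Function.Injective C.f)
    (huniv : IsUniversal C) :
    IsUniversal (idExt G) ∧
      ∀ D : CentralExtOf G, ∃ s : G →* D.E,
        (∀ x y : G, s (star x y) = star (s x) (s y)) ∧
          ∀ g : G, D.f (s g) = g := by
  have hid : IsUniversal (idExt G) := idExt_isUniversal_of_injective hinj huniv
  exact ⟨hid, hid.exists_section_of_idExt⟩

/-- Let `G` be a finite perfect multiplicative Lie algebra with trivial Schur
multiplier, i.e. admitting a universal central extension `1 → 1 → H → G → 1`
with trivial kernel. Then the identity extension `1 → 1 → G → G → 1` is also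
universal, and consequently every central extension of `G` splits. -/
theorem idExt_universal_and_splits {G : Type u} [Group G] [MulLie G] [Finite G]
    (hperf : Subgroup.closure
      {z : G | ∃ a b : G, z = star a b ∨ z = ⁅a, b⁆} = ⊤)
    (C : CentralExtOf G) (hinj : Function.Injective C.f)
    (huniv : IsUniversal C) :
    IsUniversal (idExt G) ∧
      ∀ D : CentralExtOf G, ∃ s : G →* D.E,
        (∀ x y : G, s (star x y) = star (s x) (s y)) ∧
          ∀ g : G, D.f (s g) = g :=
  idExt_universal_and_splits_general C hinj huniv
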